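/- Every partition of an integer n ≥ 4 is uniquely determined by its set of lower covers in Young's lattice: if |π| = |σ| = n ≥ 4 and π and σ have the same set of lower covers, then π = σ. -/

import Mathlib

/-- A partition: a weakly decreasing sequence of naturals with finite support. -/
structure YPart where
  f : ℕ → ℕ
  mono : ∀ i j : ℕ, i ≤ j → f j ≤ f i
  fin : ∃ N : ℕ, ∀ i : ℕ, N ≤ i → f i = 0

namespace YPart

theorem ext' {σ π : YPart} (h : σ.f = π.f) : σ = π := by
  cases σ; cases π; cases h; rfl

/-- The Young order: containment of diagrams, i.e. pointwise comparison. -/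
instance : PartialOrder YPart where
  le σ π := ∀ i, σ.f i ≤ π.f i
  le_refl σ i := le_refl _
  le_trans a b c hab hbc i := (hab i).trans (hbc i)
  le_antisymm a b hab hba := ext' (funext fun i => le_antisymm (hab i) (hba i))

noncomputable def card (π : YPart) : ℕ := ∑' i, π.f i

noncomputable def length (π : YPart) : ℕ := Nat.card {i : ℕ | 0 < π.f i}

noncomputable def mult (π : YPart) (r : ℕ) : ℕ := Nat.card {i : ℕ | π.f i = r}

/-- The rectangular partition `m[n]`: `m` parts of size `n`. -/
def rect (m n : ℕ) : YPart where
  f i := if i < m then n else 0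
  mono := by intro i j hij; split_ifs <;> omega
  fin := ⟨m, fun i hi => by split_ifs <;> omega⟩

/-- The staircase (factorial) partition `[n]! = (n, n-1, …, 1)`. -/
def stair (n : ℕ) : YPart where
  f i := n - i
  mono := by intro i j hij; omega
  fin := ⟨n, fun i hi => by omega⟩

def yempty : YPart := rect 0 0

def Rectangular (π : YPart) : Prop := ∃ m n : ℕ, π = rect m n

end YPart

/-!
A lower cover of `π` is `π` with the last box of a corner row `a` (one with
`π.f (a + 1) < π.f a`) removed. If `π` has two distinct lower covers, they remove boxes from
different rows, so `π` is their union (the pointwise maximum). Otherwise `π` has a single corner,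
i.e. it is a rectangle `m × k`, whose only lower cover is the rectangle with the last box of its
last row removed; that cover determines `m` and `k`, except for the row `(2)` and the column
`(1, 1)`, which share the cover `(1)`.
-/

lemma exists_eq_single_of_tsum_eq_one {ι : Type*} [DecidableEq ι] {g : ι → ℕ}
    (hg : Summable g) (h : ∑' i, g i = 1) : ∃ a, g = Pi.single a 1 := by
  obtain ⟨a, ha⟩ : ∃ a, g a ≠ 0 := by
    by_contra! hzero
    simp [funext hzero] at h
  have hsum : ∀ s : Finset ι, ∑ i ∈ s, g i ≤ 1 :=
    fun s => h ▸ hg.sum_le_tsum s fun _ _ => Nat.zero_le _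
  refine ⟨a, funext fun i => ?_⟩
  by_cases hi : i = a
  · subst hi
    have := hsum {i}
    simp only [Finset.sum_singleton] at this
    simp only [Pi.single_eq_same]
    omega
  · have := hsum {a, i}
    rw [Finset.sum_pair (Ne.symm hi)] at this
    simp only [Pi.single_eq_of_ne hi]
    omega

namespace YPart

def lowerCovers (π : YPart) : Set YPart := {ρ | ρ ≤ π ∧ ρ.card + 1 = π.card}

lemma hasFiniteSupport_f (π : YPart) : π.f.HasFiniteSupport := by
  obtain ⟨N, hN⟩ := π.fin
  refine (Set.finite_Iio N).subset fun i hi => ?_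
  by_contra hiN
  exact hi (hN i (not_lt.mp hiN))

lemma card_eq_add_one_of_f_eq_add_single {ρ π : YPart} {a : ℕ}
    (h : π.f = ρ.f + Pi.single a 1) : π.card = ρ.card + 1 := by
  rw [card, h, Pi.add_def, (summable_of_hasFiniteSupport ρ.hasFiniteSupport_f).tsum_add
    (hasSum_pi_single a 1).summable, tsum_pi_single, card]

lemma exists_f_eq_add_single_of_mem_lowerCovers {ρ π : YPart} (h : ρ ∈ π.lowerCovers) :
    ∃ a, π.f = ρ.f + Pi.single a 1 := by
  obtain ⟨hle, hcard⟩ := h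
  have hsplit : π.f = ρ.f + (π.f - ρ.f) := funext fun i => (add_tsub_cancel_of_le (hle i)).symm
  have hsummable : Summable (π.f - ρ.f) :=
    summable_of_hasFiniteSupport (π.hasFiniteSupport_f.subset fun i hi => by
      simp only [Function.mem_support, Pi.sub_apply] at hi ⊢
      omega)
  have htsum : ∑' i, (π.f - ρ.f) i = 1 := by
    unfold card at hcard
    rw [hsplit, Pi.add_def, (summable_of_hasFiniteSupport ρ.hasFiniteSupport_f).tsum_add
      hsummable] at hcard
    omega
  obtain ⟨a, ha⟩ := exists_eq_single_of_tsum_eq_one hsummable htsum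
  exact ⟨a, ha ▸ hsplit⟩

def removeBox (π : YPart) (a : ℕ) (ha : π.f (a + 1) < π.f a) : YPart where
  f := π.f - Pi.single a 1
  mono i j hij := by
    have hij' := π.mono i j hij
    simp only [Pi.sub_apply, Pi.single_apply]
    rcases eq_or_ne i a with rfl | hia
    · have := π.mono (i + 1) j
      split_ifs <;> omega
    · split_ifs <;> omega
  fin := by
    obtain ⟨N, hN⟩ := π.fin
    exact ⟨N, fun i hi => by simp [hN i hi]⟩

lemma f_eq_removeBox_add_single (π : YPart) {a : ℕ} (ha : π.f (a + 1) < π.f a) :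
    π.f = (π.removeBox a ha).f + Pi.single a 1 := by
  funext i
  rcases eq_or_ne i a with rfl | hia
  · simp only [removeBox, Pi.add_apply, Pi.sub_apply, Pi.single_eq_same]
    omega
  · simp [removeBox, hia]

lemma removeBox_mem_lowerCovers (π : YPart) {a : ℕ} (ha : π.f (a + 1) < π.f a) :
    π.removeBox a ha ∈ π.lowerCovers :=
  ⟨fun _ => tsub_le_self,
    (card_eq_add_one_of_f_eq_add_single (π.f_eq_removeBox_add_single ha)).symm⟩

lemma f_eq_sup_of_mem_lowerCovers {π ρ₁ ρ₂ : YPart} (h₁ : ρ₁ ∈ π.lowerCovers)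
    (h₂ : ρ₂ ∈ π.lowerCovers) (hne : ρ₁ ≠ ρ₂) : π.f = ρ₁.f ⊔ ρ₂.f := by
  obtain ⟨a₁, ha₁⟩ := exists_f_eq_add_single_of_mem_lowerCovers h₁
  obtain ⟨a₂, ha₂⟩ := exists_f_eq_add_single_of_mem_lowerCovers h₂
  have hrows : a₁ ≠ a₂ := by
    rintro rfl
    exact hne (ext' (add_right_cancel (ha₁.symm.trans ha₂)))
  funext i
  have e₁ := congrFun ha₁ i
  have e₂ := congrFun ha₂ i
  simp only [Pi.add_apply, Pi.single_apply] at e₁ e₂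
  simp only [Pi.sup_apply]
  split_ifs at e₁ e₂ <;> omega

lemma eq_of_lowerCovers_eq_of_not_subsingleton {π σ : YPart}
    (h : π.lowerCovers = σ.lowerCovers) (hu : ¬ π.lowerCovers.Subsingleton) : π = σ := by
  obtain ⟨ρ₁, h₁, ρ₂, h₂, hne⟩ := Set.not_subsingleton_iff.mp hu
  exact ext' ((f_eq_sup_of_mem_lowerCovers h₁ h₂ hne).trans
    (f_eq_sup_of_mem_lowerCovers (h ▸ h₁) (h ▸ h₂) hne).symm)

lemma f_eq_of_forall_not_corner (π : YPart) {i k : ℕ} (hik : i ≤ k)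
    (h : ∀ j, i ≤ j → j < k → π.f j ≤ π.f (j + 1)) : π.f k = π.f i := by
  induction k, hik using Nat.le_induction with
  | base => rfl
  | succ k hik ih =>
    have := π.mono k (k + 1) k.le_succ
    have := h k hik k.lt_succ_self
    rw [← ih fun j hij hjk => h j hij (by omega)]
    omega

lemma f_eq_zero_of_forall_not_corner (π : YPart) {i : ℕ}
    (h : ∀ j, i ≤ j → π.f j ≤ π.f (j + 1)) : π.f i = 0 := by
  obtain ⟨N, hN⟩ := π.fin
  rw [← π.f_eq_of_forall_not_corner (le_max_right N i) fun j hij _ => h j hij,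
    hN _ (le_max_left N i)]

lemma exists_corner (π : YPart) (hπ : π.card ≠ 0) : ∃ a, π.f (a + 1) < π.f a := by
  by_contra! h
  refine hπ ?_
  have hzero : π.f = 0 := funext fun i => π.f_eq_zero_of_forall_not_corner fun j _ => h j
  rw [card, hzero, Pi.zero_def, tsum_zero]

lemma corner_unique {π : YPart} (hu : π.lowerCovers.Subsingleton) {a b : ℕ}
    (ha : π.f (a + 1) < π.f a) (hb : π.f (b + 1) < π.f b) : a = b := by
  by_contra hab
  have := congrFun (congrArg YPart.f
    (hu (π.removeBox_mem_lowerCovers ha) (π.removeBox_mem_lowerCovers hb))) a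
  simp only [removeBox, Pi.sub_apply, Pi.single_eq_same, Pi.single_eq_of_ne hab] at this
  omega

lemma exists_eq_rect_of_subsingleton_lowerCovers {π : YPart} (hπ : π.card ≠ 0)
    (hu : π.lowerCovers.Subsingleton) : ∃ a k, 0 < k ∧ π = rect (a + 1) k := by
  obtain ⟨a, ha⟩ := π.exists_corner hπ
  have hcorner : ∀ j, j ≠ a → π.f j ≤ π.f (j + 1) := fun j hja => by
    by_contra! hj
    exact hja (corner_unique hu hj ha)
  have hbelow : π.f (a + 1) = 0 :=
    π.f_eq_zero_of_forall_not_corner fun j hj => hcorner j (by omega)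
  refine ⟨a, π.f 0, by have := π.mono 0 a a.zero_le; omega, ext' (funext fun i => ?_)⟩
  simp only [rect]
  split_ifs with hi
  · exact π.f_eq_of_forall_not_corner i.zero_le fun j _ hj => hcorner j (by omega)
  · have := π.mono (a + 1) i (by omega)
    omega

lemma rect_corner {a k : ℕ} (hk : 0 < k) :
    (rect (a + 1) k).f (a + 1) < (rect (a + 1) k).f a := by
  simp only [rect]
  split_ifs <;> omega

lemma card_rect (m k : ℕ) : (rect m k).card = m * k := by
  rw [card, tsum_eq_sum (s := Finset.range m) fun i hi => by simp_all [rect]]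
  simp [rect, Finset.sum_ite_of_true]

lemma rect_eq_of_removeBox_eq {a b k l : ℕ} (hk : 0 < k) (hl : 0 < l)
    (hcard : (a + 1) * k = (b + 1) * l) (htwo : (a + 1) * k ≠ 2)
    (h : (rect (a + 1) k).removeBox a (rect_corner hk) =
      (rect (b + 1) l).removeBox b (rect_corner hl)) :
    rect (a + 1) k = rect (b + 1) l := by
  wlog hab : a ≤ b generalizing a b k l
  · exact (this hl hk hcard.symm (hcard ▸ htwo) h.symm (by omega)).symm
  have e : ∀ i, (if i < a + 1 then k else 0) - (if i = a then 1 else 0)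
      = (if i < b + 1 then l else 0) - (if i = b then 1 else 0) := fun i => by
    simpa [removeBox, rect, Pi.single_apply] using congrFun (congrArg YPart.f h) i
  obtain rfl : a = b := by
    by_contra hne
    have hl1 : l = 1 := by have := e b; split_ifs at this <;> omega
    have hb : b = a + 1 := by have := e (a + 1); split_ifs at this <;> omega
    subst hl1 hb
    have e₀ : k - (if a = 0 then 1 else 0) = 1 := by simpa [eq_comm] using e 0
    split_ifs at e₀ with ha
    · subst ha
      omega
    · obtain rfl : k = 1 := e₀
      omega
  rw [Nat.eq_of_mul_eq_mul_left a.succ_pos hcard]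

end YPart

open YPart in
/-- Strong reconstruction: a partition of `n ≥ 4` is determined by its set of
lower covers. -/
theorem reconstruction_from_lower_covers (π σ : YPart) (n : ℕ) (h4 : 4 ≤ n)
    (hπ : card π = n) (hσ : card σ = n)
    (h : ∀ ρ : YPart, (ρ ≤ π ∧ ρ.card + 1 = n) ↔ (ρ ≤ σ ∧ ρ.card + 1 = n)) :
    π = σ := by
  have hcovers : π.lowerCovers = σ.lowerCovers := by
    ext ρ
    simpa only [lowerCovers, Set.mem_ofPred_eq, hπ, hσ] using h ρ
  by_cases hu : π.lowerCovers.Subsingleton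
  · obtain ⟨a, k, hk, rfl⟩ := exists_eq_rect_of_subsingleton_lowerCovers (by omega) hu
    obtain ⟨b, l, hl, rfl⟩ :=
      exists_eq_rect_of_subsingleton_lowerCovers (by omega) (hcovers ▸ hu)
    rw [card_rect] at hπ hσ
    refine rect_eq_of_removeBox_eq hk hl (by omega) (by omega) (hu ?_ ?_)
    · exact removeBox_mem_lowerCovers _ _
    · exact hcovers ▸ removeBox_mem_lowerCovers _ _
  · exact eq_of_lowerCovers_eq_of_not_subsingleton hcovers hu
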